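/- arXiv:2005.02143 — 2 statements merged into one kernel-verified Lean document; each statement's English description precedes it below -/
import Mathlib

section
/- Let u = m·q for positive integers m and q, let x_1, …, x_s be distinct elements of Fin u, and let w_1, …, w_s be real weights with 0 ≤ w_i ≤ W for some W ≥ 1 and Σ_{i} w_i ≤ n. Let π be a permutation of Fin u drawn uniformly at random, and assign element x_i to bin ⌊π(x_i)/q⌋ ∈ Fin m. Then for every fixed bin β ∈ Fin m, the probability that Σ_{i : x_i is assigned to bin β} w_i ≥ 6n/m is at most 2^{−6n/(mW)}. -/
/-!
The `q` positions of bin `β` form a set `B` with `|B| / u = 1 / m`, and the events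
`π (xᵢ) ∈ B` are negatively correlated: any `k` of them hold simultaneously with probability at
most `(1 / m) ^ k`, since each element already placed in `B` only shrinks the room left there.
With `bᵢ = wᵢ / W ∈ [0, 1]` and the chord bound `e ^ b ≤ 1 + (e - 1) b`, expanding the product
over subsets gives `E[exp (∑_{i ↦ β} bᵢ)] ≤ ∏ᵢ (1 + (e - 1) bᵢ / m) ≤ exp ((e - 1) n / (m W))`.
Markov's inequality at level `t = 6n / (mW)` bounds the tail by `exp (-(1 - (e - 1) / 6) t)`,
and `1 - (e - 1) / 6 ≥ log 2`.
-/

open Finset Equiv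

section Exponential

open Real

theorem exp_le_one_add_exp_one_sub_one_mul {a : ℝ} (h0 : 0 ≤ a) (h1 : a ≤ 1) :
    exp a ≤ 1 + (exp 1 - 1) * a := by
  have := convexOn_exp.2 (Set.mem_univ 0) (Set.mem_univ 1) (sub_nonneg.2 h1) h0 (by ring)
  simp only [smul_eq_mul, mul_zero, mul_one, zero_add, exp_zero] at this
  linarith

theorem exp_one_sub_one_div_six_add_log_two_le_one : (exp 1 - 1) / 6 + log 2 ≤ 1 := by
  linarith [exp_one_lt_d9, log_two_lt_d9]

theorem exp_tail_exponent_le_two_rpow {m W n S : ℝ} (hm : 0 < m) (hW : 0 < W) (hn : 0 ≤ n)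
    (hS : S ≤ n) :
    exp ((exp 1 - 1) * (1 / m) * S / W - 6 * n / m / W) ≤ (2 : ℝ) ^ (-(6 * n / (m * W))) := by
  set t := 6 * n / (m * W)
  have ht : 0 ≤ t := by positivity
  have hmean : (exp 1 - 1) * (1 / m) * S / W ≤ (exp 1 - 1) / 6 * t := by
    have he : 0 ≤ exp 1 - 1 := sub_nonneg.2 (one_le_exp zero_le_one)
    calc (exp 1 - 1) * (1 / m) * S / W ≤ (exp 1 - 1) * (1 / m) * n / W := by gcongr
      _ = (exp 1 - 1) / 6 * t := by simp only [t]; field_simp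
  have hconst := mul_nonneg ht (sub_nonneg.2 exp_one_sub_one_div_six_add_log_two_le_one)
  rw [rpow_def_of_pos two_pos, exp_le_exp, div_div]
  nlinarith

end Exponential

theorem card_filter_fin_div_eq_le (N : ℕ) {q : ℕ} (hq : 0 < q) (b : ℕ) :
    #{y : Fin N | y.val / q = b} ≤ q := by
  calc #{y : Fin N | y.val / q = b} ≤ #(range q) := by
        refine card_le_card_of_injOn (fun y => y.val % q) (fun y _ => ?_) fun y hy z hz h => ?_
        · simpa using Nat.mod_lt _ hq
        · simp only [coe_filter, mem_univ, true_and, Set.mem_ofPred_eq] at hy hz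
          ext
          rw [← Nat.div_add_mod y q, ← Nat.div_add_mod z q, hy, hz]
          exact congrArg (q * b + ·) h
    _ = q := card_range q

section PermsMapsTo

variable {α : Type*} [Fintype α] [DecidableEq α]

noncomputable def permsMapsTo (A B : Finset α) : Finset (Perm α) := {σ | ∀ a ∈ A, σ a ∈ B}

theorem permsMapsTo_insert (A B : Finset α) (a₀ : α) :
    permsMapsTo (insert a₀ A) B = {σ ∈ permsMapsTo A B | σ a₀ ∈ B} := by
  ext σ
  simp only [permsMapsTo, mem_filter, mem_univ, true_and, forall_mem_insert]
  tauto

/-- Post-composing with the transposition of `σ a₀` and some `y ∉ B` moves `a₀` out of `B`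
while keeping `A` inside `B`; remembering `σ a₀` makes this injective. -/
theorem card_permsMapsTo_insert_mul_card_compl_le {A : Finset α} {a₀ : α} (ha : a₀ ∉ A)
    (B : Finset α) :
    #(permsMapsTo (insert a₀ A) B) * #Bᶜ ≤ #{σ ∈ permsMapsTo A B | σ a₀ ∉ B} * #B := by
  rw [← card_product, ← card_product]
  refine card_le_card_of_injOn (fun p => (swap (p.1 a₀) p.2 * p.1, p.1 a₀)) ?_ ?_
  · rintro ⟨σ, y⟩ hp
    simp only [coe_product, Set.mem_prod, mem_coe, permsMapsTo_insert, mem_filter,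
      mem_compl] at hp ⊢
    obtain ⟨⟨hσA, hσa₀⟩, hy⟩ := hp
    refine ⟨⟨?_, by simpa [Perm.mul_apply] using hy⟩, hσa₀⟩
    simp only [permsMapsTo, mem_filter, mem_univ, true_and, Perm.mul_apply] at hσA ⊢
    intro a haA
    have hne₀ : σ a ≠ σ a₀ := fun h => ha (σ.injective h ▸ haA)
    have hney : σ a ≠ y := fun h => hy (h ▸ hσA a haA)
    rw [swap_apply_of_ne_of_ne hne₀ hney]
    exact hσA a haA
  · rintro ⟨σ, y⟩ _ ⟨τ, z⟩ _ h
    simp only [Prod.mk.injEq] at h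
    obtain ⟨hmul, hval⟩ := h
    have hyz : y = z := by
      simpa [Perm.mul_apply, hval] using congrArg (fun g : Perm α => g a₀) hmul
    subst hyz
    rw [hval] at hmul
    rw [mul_left_cancel hmul]

theorem card_permsMapsTo_insert_mul_le {A : Finset α} {a₀ : α} (ha : a₀ ∉ A) (B : Finset α) :
    #(permsMapsTo (insert a₀ A) B) * Fintype.card α ≤ #(permsMapsTo A B) * #B := by
  have hsplit := card_filter_add_card_filter_not (s := permsMapsTo A B) (fun σ => σ a₀ ∈ B)
  rw [← permsMapsTo_insert] at hsplit
  have hswap := card_permsMapsTo_insert_mul_card_compl_le ha B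
  rw [← card_add_card_compl B, ← hsplit, mul_add, add_mul]
  linarith

theorem card_permsMapsTo_mul_pow_le (A B : Finset α) :
    #(permsMapsTo A B) * Fintype.card α ^ #A ≤ (Fintype.card α).factorial * #B ^ #A := by
  induction A using Finset.induction_on with
  | empty => simp [permsMapsTo, Fintype.card_perm]
  | insert a₀ A ha ih =>
    rw [card_insert_of_notMem ha, pow_succ, pow_succ]
    calc #(permsMapsTo (insert a₀ A) B) * (Fintype.card α ^ #A * Fintype.card α)
        = #(permsMapsTo (insert a₀ A) B) * Fintype.card α * Fintype.card α ^ #A := by ring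
      _ ≤ #(permsMapsTo A B) * #B * Fintype.card α ^ #A :=
        Nat.mul_le_mul_right _ (card_permsMapsTo_insert_mul_le ha B)
      _ = #(permsMapsTo A B) * Fintype.card α ^ #A * #B := by ring
      _ ≤ (Fintype.card α).factorial * #B ^ #A * #B := by gcongr
      _ = (Fintype.card α).factorial * (#B ^ #A * #B) := by ring

theorem card_filter_forall_apply_mem_le [Nonempty α] {ι : Type*} {x : ι → α}
    (hx : Function.Injective x) {B : Finset α} {p : ℝ} (hB : #B ≤ p * Fintype.card α)
    (T : Finset ι) :
    (#{σ : Perm α | ∀ i ∈ T, σ (x i) ∈ B} : ℝ) ≤ Fintype.card (Perm α) * p ^ #T := by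
  have hcount := card_permsMapsTo_mul_pow_le (T.image x) B
  rw [card_image_of_injective T hx] at hcount
  have himage : permsMapsTo (T.image x) B = ({σ | ∀ i ∈ T, σ (x i) ∈ B} : Finset (Perm α)) := by
    simp [permsMapsTo]
  rw [himage] at hcount
  have hα : (0 : ℝ) < Fintype.card α := by exact_mod_cast Fintype.card_pos
  rw [Fintype.card_perm, ← mul_le_mul_iff_left₀ (pow_pos hα #T)]
  calc (#{σ : Perm α | ∀ i ∈ T, σ (x i) ∈ B} : ℝ) * Fintype.card α ^ #T
      ≤ (Fintype.card α).factorial * #B ^ #T := by exact_mod_cast hcount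
    _ ≤ (Fintype.card α).factorial * (p * Fintype.card α) ^ #T := by gcongr
    _ = (Fintype.card α).factorial * p ^ #T * Fintype.card α ^ #T := by ring

end PermsMapsTo

section Chernoff

open Real

variable {Ω ι : Type*} [Fintype Ω] [Fintype ι] [DecidableEq ι]
  (P : ι → Ω → Prop) [∀ i ω, Decidable (P i ω)]

theorem sum_prod_one_add_mul_ite_eq {R : Type*} [CommSemiring R] (a : ι → R) :
    ∑ ω, ∏ i, (1 + a i * if P i ω then 1 else 0)
      = ∑ T ∈ univ.powerset, (∏ i ∈ T, a i) * #{ω | ∀ i ∈ T, P i ω} := by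
  simp_rw [prod_one_add, prod_mul_distrib, prod_boole]
  rw [sum_comm]
  refine sum_congr rfl fun T _ => ?_
  rw [← mul_sum]
  congr 1
  convert sum_boole (fun ω => ∀ i ∈ T, P i ω) univ

theorem sum_prod_one_add_mul_ite_le {a : ι → ℝ} {p : ℝ} (ha : ∀ i, 0 ≤ a i) (hp : 0 ≤ p)
    (hP : ∀ T : Finset ι, (#{ω | ∀ i ∈ T, P i ω} : ℝ) ≤ Fintype.card Ω * p ^ #T) :
    ∑ ω, ∏ i, (1 + a i * if P i ω then 1 else 0) ≤ Fintype.card Ω * exp (p * ∑ i, a i) := by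
  rw [sum_prod_one_add_mul_ite_eq, mul_sum]
  calc ∑ T ∈ univ.powerset, (∏ i ∈ T, a i) * (#{ω | ∀ i ∈ T, P i ω} : ℝ)
      ≤ ∑ T ∈ univ.powerset, (∏ i ∈ T, a i) * (Fintype.card Ω * p ^ #T) :=
        sum_le_sum fun T _ => mul_le_mul_of_nonneg_left (hP T) (prod_nonneg fun i _ => ha i)
    _ = Fintype.card Ω * ∏ i, (1 + p * a i) := by
        rw [prod_one_add, mul_sum]
        refine sum_congr rfl fun T _ => ?_
        rw [prod_mul_distrib, prod_const]
        ring
    _ ≤ Fintype.card Ω * exp (∑ i, p * a i) := by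
        gcongr
        exact prod_one_add_le_exp_sum _ fun i => mul_nonneg hp (ha i)

theorem card_filter_le_sum_filter_le_mul_exp {w : ι → ℝ} {W p : ℝ} (hW : 0 < W) (hw0 : ∀ i, 0 ≤ w i)
    (hwW : ∀ i, w i ≤ W) (hp : 0 ≤ p)
    (hP : ∀ T : Finset ι, (#{ω | ∀ i ∈ T, P i ω} : ℝ) ≤ Fintype.card Ω * p ^ #T) (t : ℝ) :
    (#{ω | t ≤ ∑ i with P i ω, w i} : ℝ)
      ≤ Fintype.card Ω * exp ((exp 1 - 1) * p * (∑ i, w i) / W - t / W) := by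
  set S : Ω → ℝ := fun ω => ∑ i with P i ω, w i
  have markov : (#{ω | t ≤ S ω} : ℝ) * exp (t / W) ≤ ∑ ω, exp (S ω / W) := by
    rw [← nsmul_eq_mul]
    refine (card_nsmul_le_sum _ _ _ fun ω hω => ?_).trans
      (sum_le_sum_of_subset_of_nonneg (filter_subset _ _) fun _ _ _ => (exp_pos _).le)
    exact exp_le_exp.2 (div_le_div_of_nonneg_right (mem_filter.1 hω).2 hW.le)
  have hb0 (i : ι) : 0 ≤ w i / W := div_nonneg (hw0 i) hW.le
  have hb1 (i : ι) : w i / W ≤ 1 := (div_le_one hW).2 (hwW i)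
  have mgf : ∑ ω, exp (S ω / W) ≤ Fintype.card Ω * exp (p * ∑ i, (exp 1 - 1) * (w i / W)) := by
    refine le_trans (sum_le_sum fun ω _ => ?_) (sum_prod_one_add_mul_ite_le P
      (fun i => mul_nonneg (sub_nonneg.2 (one_le_exp zero_le_one)) (hb0 i)) hp hP)
    rw [sum_div, exp_sum, prod_filter]
    refine prod_le_prod (fun i _ => by positivity) fun i _ => ?_
    split_ifs
    · simpa using exp_le_one_add_exp_one_sub_one_mul (hb0 i) (hb1 i)
    · simp
  rw [exp_sub, mul_div_assoc', le_div_iff₀ (exp_pos _)]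
  convert markov.trans mgf using 3
  rw [mul_sum, mul_sum, sum_div]
  exact sum_congr rfl fun i _ => by ring

end Chernoff

/-- Let `u = m * q`, let `x₁, …, x_s` be distinct elements of `Fin u`, and let
`w₁, …, w_s` be real weights with `0 ≤ wᵢ ≤ W` for some `W ≥ 1` and `∑ᵢ wᵢ ≤ n`.
For a uniformly random permutation `π` of `Fin u`, element `xᵢ` is assigned to bin
`⌊π xᵢ / q⌋ ∈ Fin m`.  Then for every fixed bin `β ∈ Fin m`, the probability that
`∑_{i : xᵢ assigned to β} wᵢ ≥ 6n/m` is at most `2 ^ (−6n/(mW))`. -/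
theorem bin_weight_overflow_prob
    (u m q s : ℕ) (hm : 0 < m) (hq : 0 < q) (hu : u = m * q)
    (x : Fin s → Fin u) (hx : Function.Injective x)
    (w : Fin s → ℝ) (W n : ℝ) (hW : 1 ≤ W)
    (hw0 : ∀ i, 0 ≤ w i) (hwW : ∀ i, w i ≤ W)
    (hsum : ∑ i, w i ≤ n)
    (β : Fin m) :
    ((Finset.univ.filter (fun π : Equiv.Perm (Fin u) =>
        6 * n / m ≤ ∑ i ∈ Finset.univ.filter
          (fun i : Fin s => (π (x i)).val / q = β.val), w i)).card : ℝ)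
      / (Fintype.card (Equiv.Perm (Fin u)) : ℝ)
      ≤ (2 : ℝ) ^ (-(6 * n / (m * W))) := by
  subst hu
  have hW0 : 0 < W := zero_lt_one.trans_le hW
  have hm0 : (0 : ℝ) < m := Nat.cast_pos.2 hm
  have : NeZero (m * q) := ⟨(Nat.mul_pos hm hq).ne'⟩
  have hbin :
      (#{y : Fin (m * q) | y.val / q = β.val} : ℝ) ≤ 1 / m * Fintype.card (Fin (m * q)) := by
    rw [Fintype.card_fin, Nat.cast_mul, ← mul_assoc, one_div_mul_cancel hm0.ne', one_mul]
    exact_mod_cast card_filter_fin_div_eq_le (m * q) hq β.val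
  rw [div_le_iff₀' (by positivity)]
  -- `convert` also reconciles the `Decidable` instances of the two filters
  refine (card_filter_le_sum_filter_le_mul_exp _ hW0 hw0 hwW (p := 1 / m) (by positivity)
    (fun T => by convert card_filter_forall_apply_mem_le hx hbin T using 4; simp) _).trans ?_
  gcongr
  exact exp_tail_exponent_le_two_rpow hm0 hW0 ((sum_nonneg fun i _ => hw0 i).trans hsum) hsum
end

section
/- There exists n₀ such that the following holds for all n ≥ n₀. Let u = m·q for positive integers m, q with m ≥ n/log₂ n, let x_1, …, x_s be distinct elements of Fin u with s ≤ n, and let π be a permutation of Fin u drawn uniformly at random, assigning element x_i to bin ⌊π(x_i)/q⌋ ∈ Fin m. Then with probability at least 1 − 1/n, every bin β ∈ Fin m is assigned at most (log₂ n)² of the elements x_1, …, x_s. -/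
/-!
Put `L = log₂ n` and `k = ⌊L²⌋ + 1`. A bin of size `q` is overloaded only if some `k` of the
elements all land in it, and for a fixed `k`-set this has probability
`(q)_k / (u)_k ≤ (q / u)^k = m⁻ᵏ`. A union bound over the `m` bins and the `C(s, k) ≤ nᵏ / k!`
sets bounds the failure probability by `m nᵏ / (k! mᵏ) ≤ n Lᵏ / k! ≤ n (e L / k)ᵏ ≤ n 2⁻ᵏ ≤ 1 / n`,
using `m ≥ n / L`, `k ≥ L²` and `L ≥ 6`.
-/

open Finset Equiv Nat

theorem Nat.descFactorial_mul_pow_le {b n : ℕ} (h : b ≤ n) (k : ℕ) :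
    b.descFactorial k * n ^ k ≤ b ^ k * n.descFactorial k := by
  induction k with
  | zero => simp
  | succ k ih =>
    have hstep : (b - k) * n ≤ b * (n - k) := by
      rw [Nat.sub_mul, Nat.mul_sub]
      exact Nat.sub_le_sub_left (Nat.mul_comm b k ▸ Nat.mul_le_mul_left k h) _
    calc b.descFactorial (k + 1) * n ^ (k + 1) = (b - k) * n * (b.descFactorial k * n ^ k) := by
          rw [descFactorial_succ, pow_succ]; ring
      _ ≤ b * (n - k) * (b ^ k * n.descFactorial k) := Nat.mul_le_mul hstep ih
      _ = _ := by rw [descFactorial_succ, pow_succ]; ring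

section PermCounting

variable {α : Type*} [Fintype α] [DecidableEq α]

theorem card_perm_eqOn (A : Finset α) (σ : Perm α) :
    #{π : Perm α | ∀ a ∈ A, π a = σ a} = (Fintype.card α - #A)! := by
  have e : {π : Perm α // ∀ a ∈ A, π a = σ a} ≃ Perm {a // a ∉ A} :=
    ((Equiv.mulLeft σ⁻¹).subtypeEquiv (q := fun π => ∀ a, ¬a ∉ A → π a = a)
      fun π => by simp [Equiv.symm_apply_eq]).trans (Perm.subtypeEquivSubtypePerm _).symm
  rw [← Fintype.card_subtype, Fintype.card_congr e, Fintype.card_perm, Fintype.card_subtype_compl,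
    Fintype.card_coe]

theorem card_perm_mapsTo_le (A B : Finset α) :
    #{π : Perm α | ∀ a ∈ A, π a ∈ B} ≤ (#B).descFactorial #A * (Fintype.card α - #A)! := by
  set S : Finset (Perm α) := {π | ∀ a ∈ A, π a ∈ B}
  let r : Perm α → A → α := fun π a => π a
  have hfiber : ∀ g ∈ S.image r, #{π ∈ S | r π = g} ≤ (Fintype.card α - #A)! := by
    intro g hg
    obtain ⟨σ, -, rfl⟩ := mem_image.1 hg
    rw [← card_perm_eqOn A σ]
    refine card_le_card fun π hπ => ?_
    simp only [mem_filter, mem_univ, true_and] at hπ ⊢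
    exact fun a ha => congrFun hπ.2 ⟨a, ha⟩
  have himage : S.image r ⊆ univ.image fun (e : A ↪ B) a => (e a : α) := by
    intro g hg
    obtain ⟨σ, hσ, rfl⟩ := mem_image.1 hg
    simp only [S, mem_filter, mem_univ, true_and] at hσ
    exact mem_image.2 ⟨⟨fun a => ⟨σ a, hσ a a.2⟩, fun a b h => Subtype.ext (by simpa using h)⟩,
      mem_univ _, rfl⟩
  calc #S ≤ (Fintype.card α - #A)! * #(S.image r) := card_le_mul_card_image S _ hfiber
    _ ≤ (Fintype.card α - #A)! * Fintype.card (A ↪ B) :=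
      Nat.mul_le_mul_left _ ((card_le_card himage).trans card_image_le)
    _ = _ := by rw [Fintype.card_embedding_eq, Fintype.card_coe, Fintype.card_coe, mul_comm]

theorem card_perm_mapsTo_mul_pow_le (A B : Finset α) :
    #{π : Perm α | ∀ a ∈ A, π a ∈ B} * Fintype.card α ^ #A ≤ #B ^ #A * (Fintype.card α)! := by
  rcases le_or_gt #A (Fintype.card α) with hA | hA
  · calc _ ≤ (#B).descFactorial #A * (Fintype.card α - #A)! * Fintype.card α ^ #A :=
          Nat.mul_le_mul_right _ (card_perm_mapsTo_le A B)
      _ = (#B).descFactorial #A * Fintype.card α ^ #A * (Fintype.card α - #A)! := by ring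
      _ ≤ #B ^ #A * (Fintype.card α).descFactorial #A * (Fintype.card α - #A)! :=
          Nat.mul_le_mul_right _ (Nat.descFactorial_mul_pow_le B.card_le_univ _)
      _ = _ := by rw [mul_assoc, mul_comm _ (_ - _)!, factorial_mul_descFactorial hA]
  · have hzero : (#B).descFactorial #A = 0 :=
      descFactorial_eq_zero_iff_lt.2 (B.card_le_univ.trans_lt hA)
    have := card_perm_mapsTo_le A B
    rw [hzero, zero_mul, Nat.le_zero] at this
    simp [this]

theorem card_perm_le_count_mul_pow_le {ι : Type*} [Fintype ι] {x : ι → α}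
    (hx : Function.Injective x) (p : α → Prop) [DecidablePred p] (k : ℕ) :
    #{π : Perm α | k ≤ #{i | p (π (x i))}} * Fintype.card α ^ k
      ≤ (Fintype.card ι).choose k * #{a | p a} ^ k * (Fintype.card α)! := by
  set B : Finset α := {a | p a}
  have hcover : ({π | k ≤ #{i | p (π (x i))}} : Finset (Perm α)) ⊆ (powersetCard k univ).biUnion
      fun T => {π : Perm α | ∀ a ∈ T.map ⟨x, hx⟩, π a ∈ B} := by
    intro π hπ
    obtain ⟨T, hTp, hTk⟩ := exists_subset_card_eq (mem_filter.1 hπ).2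
    simp only [mem_biUnion, mem_powersetCard, mem_filter, mem_univ, true_and, mem_map]
    refine ⟨T, ⟨subset_univ T, hTk⟩, ?_⟩
    rintro _ ⟨i, hi, rfl⟩
    simpa [B] using hTp hi
  calc _ ≤ (∑ T ∈ powersetCard k univ, #{π : Perm α | ∀ a ∈ T.map ⟨x, hx⟩, π a ∈ B})
        * Fintype.card α ^ k := Nat.mul_le_mul_right _ ((card_le_card hcover).trans card_biUnion_le)
    _ ≤ ∑ _T ∈ powersetCard k (univ : Finset ι), #B ^ k * (Fintype.card α)! := by
      rw [sum_mul]
      refine sum_le_sum fun T hT => ?_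
      have hTk : #(T.map ⟨x, hx⟩) = k := by rw [card_map, (mem_powersetCard.1 hT).2]
      simpa only [hTk] using card_perm_mapsTo_mul_pow_le (T.map ⟨x, hx⟩) B
    _ = _ := by rw [sum_const, card_powersetCard, Finset.card_univ, smul_eq_mul, mul_assoc]

end PermCounting

theorem Fin.card_filter_div_eq (m q : ℕ) (β : Fin m) :
    #{y : Fin (m * q) | y.val / q = β.val} = q := by
  rw [card_equiv finProdFinEquiv.symm (t := {p : Fin m × Fin q | p.1 = β})]
  · rw [show ({p | p.1 = β} : Finset (Fin m × Fin q)) = {β} ×ˢ univ by ext ⟨b, c⟩; simp [eq_comm]]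
    simp
  · intro y; simp [Fin.ext_iff]

theorem card_perm_bin_load_ge_le {m q s : ℕ} (hq : 0 < q) {x : Fin s → Fin (m * q)}
    (hx : Function.Injective x) (β : Fin m) (k : ℕ) :
    (#{π : Perm (Fin (m * q)) | k ≤ #{i | (π (x i)).val / q = β.val}} : ℝ)
      ≤ s.choose k / (m : ℝ) ^ k * (m * q)! := by
  have h := card_perm_le_count_mul_pow_le hx (fun y : Fin (m * q) => y.val / q = β.val) k
  rw [Fin.card_filter_div_eq, Fintype.card_fin, Fintype.card_fin] at h
  have h' : (#{π : Perm (Fin (m * q)) | k ≤ #{i | (π (x i)).val / q = β.val}} : ℝ) * m ^ k * q ^ k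
      ≤ s.choose k * (m * q)! * q ^ k := by
    rw [mul_assoc, ← mul_pow]
    exact_mod_cast h.trans_eq (by ring)
  have hm : (0 : ℝ) < m := Nat.cast_pos.2 β.pos
  rw [div_mul_eq_mul_div, le_div_iff₀ (by positivity)]
  exact le_of_mul_le_mul_right h' (by positivity)

open Real in
theorem pow_div_factorial_le_exp_one_mul_div_pow {x : ℝ} (hx : 0 ≤ x) (k : ℕ) :
    x ^ k / k ! ≤ (exp 1 * x / k) ^ k := by
  rcases k.eq_zero_or_pos with rfl | hk
  · simp
  have hk' : (0 : ℝ) < k := by exact_mod_cast hk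
  calc x ^ k / k ! = (x / k) ^ k * ((k : ℝ) ^ k / k !) := by rw [div_pow]; field_simp
    _ ≤ (x / k) ^ k * exp k := by gcongr; exact Real.pow_div_factorial_le_exp _ hk'.le k
    _ = _ := by rw [← exp_one_pow, ← mul_pow]; ring

theorem sq_le_two_pow_of_logb_sq_le {x : ℝ} (hx : 0 < x) (hL : 2 ≤ Real.logb 2 x) {k : ℕ}
    (hk : Real.logb 2 x ^ 2 ≤ k) : x ^ 2 ≤ 2 ^ k := by
  have hx2 : x ^ 2 = (2 : ℝ) ^ (Real.logb 2 x * 2) := by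
    rw [Real.rpow_mul zero_le_two, Real.rpow_logb zero_lt_two one_lt_two.ne' hx,
      Real.rpow_two]
  rw [hx2, ← Real.rpow_natCast]
  exact Real.rpow_le_rpow_of_exponent_le one_le_two (by nlinarith)

theorem mul_choose_div_pow_le_inv {n m s k : ℕ} (hn : 64 ≤ n)
    (hm : (n : ℝ) / Real.logb 2 n ≤ m) (hs : s ≤ n) (hk : Real.logb 2 n ^ 2 ≤ k) :
    (m : ℝ) * s.choose k / (m : ℝ) ^ k ≤ 1 / n := by
  set L := Real.logb 2 n
  have hn0 : (0 : ℝ) < n := by positivity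
  have hL : 6 ≤ L := by
    rw [Real.le_logb_iff_rpow_le one_lt_two hn0]
    exact_mod_cast hn
  have hm0 : (0 : ℝ) < m := (by positivity : (0 : ℝ) < n / L).trans_le hm
  have hnm : n / m ≤ L := by
    rw [div_le_iff₀ hm0]; rw [div_le_iff₀ (by positivity)] at hm; linarith
  have hk0 : (0 : ℝ) < k := by nlinarith
  obtain ⟨j, rfl⟩ : ∃ j, k = j + 1 := Nat.exists_eq_add_one.2 (by exact_mod_cast hk0)
  have hhalf : Real.exp 1 * L / (j + 1 : ℕ) ≤ 1 / 2 := by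
    rw [div_le_iff₀ (by positivity)]
    nlinarith [Real.exp_one_lt_d9]
  calc (m : ℝ) * s.choose (j + 1) / (m : ℝ) ^ (j + 1)
      ≤ m * ((n : ℝ) ^ (j + 1) / (j + 1) !) / m ^ (j + 1) := by
        gcongr
        exact (Nat.choose_le_pow_div _ _).trans (by gcongr)
    _ = n * (n / m) ^ j / (j + 1) ! := by rw [div_pow]; field_simp; ring
    _ ≤ n * L ^ (j + 1) / (j + 1) ! := by
        gcongr
        calc (n / m : ℝ) ^ j ≤ L ^ j := by gcongr
          _ ≤ L ^ (j + 1) := pow_le_pow_right₀ (by linarith) j.le_succ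
    _ ≤ n * (1 / 2) ^ (j + 1) := by
        rw [mul_div_assoc]
        gcongr
        exact (pow_div_factorial_le_exp_one_mul_div_pow (by linarith) _).trans
          (pow_le_pow_left₀ (by positivity) hhalf _)
    _ ≤ 1 / n := by
        rw [one_div_pow, mul_one_div, div_le_div_iff₀ (by positivity) hn0]
        nlinarith [sq_le_two_pow_of_logb_sq_le hn0 (by linarith) hk]

theorem one_sub_le_card_filter_div {β : Type*} [Fintype β] [Nonempty β] (p : β → Prop)
    [DecidablePred p] {ε : ℝ} (h : (#{b | ¬p b} : ℝ) ≤ ε * Fintype.card β) :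
    1 - ε ≤ #{b | p b} / Fintype.card β := by
  have hsplit : (#{b | p b} : ℝ) + #{b | ¬p b} = Fintype.card β := by
    exact_mod_cast card_filter_add_card_filter_not p
  rw [le_div_iff₀ (by exact_mod_cast Fintype.card_pos)]
  linarith

/-- There exists `n₀` such that for all `n ≥ n₀`: let `u = m * q` with
`m ≥ n / log₂ n`, let `x₁, …, x_s` be distinct elements of `Fin u` with `s ≤ n`,
and let `π` be a uniformly random permutation of `Fin u` assigning `xᵢ` to bin
`⌊π xᵢ / q⌋ ∈ Fin m`.  Then with probability at least `1 − 1/n`, every bin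
`β ∈ Fin m` is assigned at most `(log₂ n)²` of the elements `x₁, …, x_s`. -/
theorem max_bin_load :
    ∃ n₀ : ℕ, ∀ n : ℕ, n₀ ≤ n →
    ∀ (u m q s : ℕ), 0 < m → 0 < q → u = m * q →
      (n : ℝ) / Real.logb 2 n ≤ m → s ≤ n →
    ∀ (x : Fin s → Fin u), Function.Injective x →
    (1 : ℝ) - 1 / n ≤
      ((Finset.univ.filter (fun π : Equiv.Perm (Fin u) =>
          ∀ β : Fin m,
            ((Finset.univ.filter
                (fun i : Fin s => (π (x i)).val / q = β.val)).card : ℝ)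
              ≤ (Real.logb 2 n) ^ 2)).card : ℝ)
        / (Fintype.card (Equiv.Perm (Fin u)) : ℝ) := by
  refine ⟨64, fun n hn u m q s _ hq hu hmn hs x hx => ?_⟩
  subst hu
  set k := ⌊Real.logb 2 n ^ 2⌋₊ + 1
  have hoverload : ∀ π : Perm (Fin (m * q)),
      ¬(∀ β : Fin m, (#{i | (π (x i)).val / q = β.val} : ℝ) ≤ Real.logb 2 n ^ 2) →
        π ∈ univ.biUnion fun β : Fin m => {π | k ≤ #{i | (π (x i)).val / q = β.val}} := by
    intro π hπ
    obtain ⟨β, hβ⟩ := not_forall.1 hπ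
    exact mem_biUnion.2 ⟨β, mem_univ β, mem_filter.2 ⟨mem_univ π,
      (Nat.floor_lt (sq_nonneg _)).2 (not_le.1 hβ)⟩⟩
  apply one_sub_le_card_filter_div
  calc _ ≤ ∑ β : Fin m, (#{π : Perm (Fin (m * q)) | k ≤ #{i | (π (x i)).val / q = β.val}} : ℝ) := by
        exact_mod_cast (card_le_card fun π hπ => hoverload π (mem_filter.1 hπ).2).trans
          card_biUnion_le
    _ ≤ m * (s.choose k / (m : ℝ) ^ k * (m * q)!) := by
        simpa using sum_le_sum fun β (_ : β ∈ univ) => card_perm_bin_load_ge_le hq hx β k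
    _ = m * s.choose k / (m : ℝ) ^ k * Fintype.card (Perm (Fin (m * q))) := by
        rw [Fintype.card_perm, Fintype.card_fin]; ring
    _ ≤ 1 / n * Fintype.card (Perm (Fin (m * q))) := by
        refine mul_le_mul_of_nonneg_right (mul_choose_div_pow_le_inv hn hmn hs ?_) (by positivity)
        exact_mod_cast (Nat.lt_floor_add_one _).le
end
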